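/- If A is a closed subset of the unit sphere S² with non-empty interior, A is contained in the interior of some hemisphere, and at every boundary point of A there is a closed hemisphere containing A whose boundary passes through that point, then A is spherically convex (i.e., for any two points of A the shorter great-circle arc connecting them lies in A). -/

import Mathlib

open scoped InnerProductSpace

noncomputable section

abbrev E3 := EuclideanSpace ℝ (Fin 3)

/-- The unit sphere S² in E³. -/
def S2 : Set E3 := Metric.sphere 0 1

/-- Spherical (geodesic) distance on the unit sphere. -/
def sdist (x y : E3) : ℝ := Real.arccos ⟪x, y⟫_ℝ

/-- The shorter great-circle arc joining `a` and `b`. -/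
def arc (a b : E3) : Set E3 := {x | x ∈ S2 ∧ sdist a x + sdist x b = sdist a b}

/-- Spherical convexity. -/
def SphConvex (A : Set E3) : Prop :=
  A ⊆ S2 ∧ (∀ x ∈ A, -x ∉ A) ∧ ∀ a ∈ A, ∀ b ∈ A, arc a b ⊆ A

/-- Closed hemisphere with center `c`. -/
def hemi (c : E3) : Set E3 := {x ∈ S2 | sdist c x ≤ Real.pi / 2}

/-- Open hemisphere with center `c`. -/
def openHemi (c : E3) : Set E3 := {x ∈ S2 | sdist c x < Real.pi / 2}

/-- Boundary of `A` relative to the sphere. -/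
def relBoundary (A : Set E3) : Set E3 :=
  {p ∈ S2 | ∀ r > 0, (Metric.ball p r ∩ S2 ∩ A).Nonempty ∧ ((Metric.ball p r ∩ S2) \ A).Nonempty}

/-- `A` has nonempty interior relative to the sphere. -/
def relIntNonempty (A : Set E3) : Prop := ∃ p ∈ S2, ∃ r > 0, Metric.ball p r ∩ S2 ⊆ A

/-- A spherical convex body. -/
def SphConvexBody (A : Set E3) : Prop := IsClosed A ∧ SphConvex A ∧ relIntNonempty A

/-- The hemisphere centered at `c` supports `A`. -/
def Supports (c : E3) (A : Set E3) : Prop :=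
  c ∈ S2 ∧ A ⊆ hemi c ∧ ∃ p ∈ A, sdist c p = Real.pi / 2

/-- The hemisphere centered at `c` supports `A` at the point `p`. -/
def SupportsAt (c : E3) (A : Set E3) (p : E3) : Prop :=
  c ∈ S2 ∧ A ⊆ hemi c ∧ p ∈ A ∧ sdist c p = Real.pi / 2

/-- `hemi g` and `hemi h` form a lune: distinct hemispheres with non-antipodal centers. -/
def IsLunePair (g h : E3) : Prop := g ∈ S2 ∧ h ∈ S2 ∧ g ≠ h ∧ g ≠ -h

/-- The center (midpoint) of the semicircle `G/H ⊆ bd(hemi g)` bounding the lune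
`hemi g ∩ hemi h`: the point of the great circle `bd(hemi g)` nearest to `h`. -/
def scCenter (g h : E3) : E3 := ‖h - ⟪h, g⟫_ℝ • g‖⁻¹ • (h - ⟪h, g⟫_ℝ • g)

/-- Thickness of the lune `hemi g ∩ hemi h`: the spherical distance between the
centers of its two bounding semicircles. -/
def luneTh (g h : E3) : ℝ := sdist (scCenter g h) (scCenter h g)

/-- The width of `A` determined by the supporting hemisphere centered at `c`:
the minimal thickness of a lune `K ∩ K*` with `K*` supporting `A`. -/
def widthAt (c : E3) (A : Set E3) : ℝ :=
  sInf {t | ∃ c', Supports c' A ∧ IsLunePair c c' ∧ t = luneTh c c'}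

/-- The thickness of `A`: the minimum of `widthAt` over supporting hemispheres. -/
def thickness (A : Set E3) : ℝ :=
  sInf {t | ∃ c, Supports c A ∧ t = widthAt c A}

/-- `A` is of constant width `w`. -/
def ConstWidth (A : Set E3) (w : ℝ) : Prop := ∀ c, Supports c A → widthAt c A = w

/-- A reduced spherical convex body. -/
def Reduced (R : Set E3) : Prop :=
  SphConvexBody R ∧ ∀ Z, SphConvexBody Z → Z ⊆ R → Z ≠ R → thickness Z < thickness R

/-- Cross product in E³. -/
def cross (u v : E3) : E3 :=
  (WithLp.equiv 2 (Fin 3 → ℝ)).symm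
    ![u 1 * v 2 - u 2 * v 1, u 2 * v 0 - u 0 * v 2, u 0 * v 1 - u 1 * v 0]

/-- Orientation determinant of a triple of vectors in E³. -/
def det3 (u v w : E3) : ℝ := ⟪cross u v, w⟫_ℝ

/-- `m` lies strictly between `m₁` and `m₂` in counterclockwise order
(positively oriented triple): the relation `≺ M₁ M M₂`. -/
def CCWBetween (m₁ m m₂ : E3) : Prop := 0 < det3 m₁ m m₂

/-- `c` is the center of the right supporting hemisphere of `A` at `p`. -/
def RightSupport (c : E3) (A : Set E3) (p : E3) : Prop :=
  SupportsAt c A p ∧ ∀ c', SupportsAt c' A p → 0 ≤ ⟪c', cross p c⟫_ℝ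

/-- `c` is the center of the left supporting hemisphere of `A` at `p`. -/
def LeftSupport (c : E3) (A : Set E3) (p : E3) : Prop :=
  SupportsAt c A p ∧ ∀ c', SupportsAt c' A p → ⟪c', cross p c⟫_ℝ ≤ 0

/-- Spherical angle at vertex `b` of the triangle `a b c`. -/
def sAngle (a b c : E3) : ℝ :=
  InnerProductGeometry.angle (a - ⟪a, b⟫_ℝ • b) (c - ⟪c, b⟫_ℝ • b)

/-- Spherical convex hull. -/
def sconvHull (A : Set E3) : Set E3 := ⋂₀ {B | A ⊆ B ∧ SphConvex B}

/-- Distance from a point to a set, in the spherical metric. -/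
def sInfDist (x : E3) (A : Set E3) : ℝ := sInf (sdist x '' A)

/-- Hausdorff distance with respect to the spherical metric. -/
def sHD (A B : Set E3) : ℝ :=
  max (sSup ((fun a => sInfDist a B) '' A)) (sSup ((fun b => sInfDist b A) '' B))

/-!
Antipodal points never lie together in an open hemisphere, so only the arcs need an argument.
Suppose a point `x` of the arc from `a` to `b` is not in `A`. Walk along the great-circle arc
from an interior point `z` of `A` to `x`: by connectedness it leaves `A` at a boundary point `p`.
The hemisphere supporting `A` at `p` contains `a` and `b`, hence the whole arc from `a` to `b`
and so `x`, and it contains `z` in its interior. The arc from `z` to `x` can then meet the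
boundary great circle only at `x`, so `p = x`, which contradicts `x ∉ A`.
-/

open Set Metric Filter Topology

theorem IsPreconnected.exists_mem_inter_closure_diff {X : Type*} [TopologicalSpace X]
    {P A : Set X} (hP : IsPreconnected P) (hA : IsClosed A) (hPA : (P ∩ A).Nonempty)
    (hPA' : ¬P ⊆ A) : ∃ p ∈ P ∩ A, p ∈ closure (P \ A) := by
  obtain ⟨y, hyP, hyA⟩ := not_subset.1 hPA'
  obtain ⟨p, hpP, hpA, hpcl⟩ := isPreconnected_closed_iff.1 hP A (closure (P \ A)) hA
    isClosed_closure (fun y hy => or_iff_not_imp_left.2 fun hyA => subset_closure ⟨hy, hyA⟩)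
    hPA ⟨y, hyP, subset_closure ⟨hyP, hyA⟩⟩
  exact ⟨p, ⟨hpP, hpA⟩, hpcl⟩

section InnerProductSpace

variable {E : Type*} [NormedAddCommGroup E] [InnerProductSpace ℝ E]

theorem continuousAt_normalize {x : E} (hx : x ≠ 0) : ContinuousAt NormedSpace.normalize x :=
  (continuous_norm.continuousAt.inv₀ (norm_ne_zero_iff.2 hx)).smul continuousAt_id

theorem real_inner_normalize_right (c w : E) :
    ⟪c, NormedSpace.normalize w⟫_ℝ = ‖w‖⁻¹ * ⟪c, w⟫_ℝ :=
  real_inner_smul_right c w _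

theorem real_inner_smul_add_smul_right (c a b : E) (s t : ℝ) :
    ⟪c, s • a + t • b⟫_ℝ = s * ⟪c, a⟫_ℝ + t * ⟪c, b⟫_ℝ := by
  rw [inner_add_right, real_inner_smul_right, real_inner_smul_right]

theorem inner_pos_of_ball_inter_sphere_subset {A : Set E} {c z : E} {ρ : ℝ} (hc : c ≠ 0)
    (hz : z ∈ sphere (0 : E) 1) (hρ : 0 < ρ) (hball : ball z ρ ∩ sphere 0 1 ⊆ A)
    (hA : ∀ y ∈ A, 0 ≤ ⟪c, y⟫_ℝ) : 0 < ⟪c, z⟫_ℝ := by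
  by_contra! hcz
  -- push `z` slightly towards `-c` and back onto the sphere
  have hcε : ∀ ε : ℝ, 0 < ε → ⟪c, z - ε • c⟫_ℝ < 0 := fun ε hε => by
    rw [inner_sub_right, real_inner_smul_right, real_inner_self_eq_norm_sq]
    nlinarith [mul_pos hε (pow_pos (norm_pos_iff.2 hc) 2)]
  have hlim :
      Tendsto (fun ε : ℝ => NormedSpace.normalize (z - ε • c)) (𝓝[>] 0) (𝓝 z) := by
    have h := (continuousAt_normalize (ne_zero_of_mem_unit_sphere ⟨z, hz⟩)).tendsto.comp
      (((by fun_prop : Continuous fun ε : ℝ => z - ε • c).tendsto' 0 z (by simp)).mono_left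
        (nhdsWithin_le_nhds (s := Ioi 0)))
    rwa [NormedSpace.normalize_eq_self_of_norm_eq_one (mem_sphere_zero_iff_norm.1 hz)] at h
  obtain ⟨ε, hεball, hε⟩ :=
    ((hlim.eventually (isOpen_ball.mem_nhds (mem_ball_self hρ))).and self_mem_nhdsWithin).exists
  have hne : z - ε • c ≠ 0 := fun h => (hcε ε hε).ne (by rw [h, inner_zero_right])
  have hA' := hA _
    (hball ⟨hεball, mem_sphere_zero_iff_norm.2 (NormedSpace.norm_normalize hne)⟩)
  rw [real_inner_normalize_right] at hA'
  exact hA'.not_gt (mul_neg_of_pos_of_neg (inv_pos.2 (norm_pos_iff.2 hne)) (hcε ε hε))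

theorem eq_right_of_mem_segment_of_inner_eq_zero {c z x w : E} (hw : w ∈ segment ℝ z x)
    (hz : 0 < ⟪c, z⟫_ℝ) (hx : 0 ≤ ⟪c, x⟫_ℝ) (hcw : ⟪c, w⟫_ℝ = 0) : w = x := by
  obtain ⟨s, t, hs, ht, hst, rfl⟩ := hw
  rw [real_inner_smul_add_smul_right] at hcw
  have hs0 : s = 0 := by nlinarith [mul_nonneg ht hx]
  obtain rfl : t = 1 := by linarith
  simp [hs0]

theorem zero_notMem_segment_of_inner_pos {q z x : E} (hz : 0 < ⟪q, z⟫_ℝ)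
    (hx : 0 < ⟪q, x⟫_ℝ) : (0 : E) ∉ segment ℝ z x := fun h => by
  simpa using (convex_halfSpace_gt (innerₛₗ ℝ q).isLinear 0).segment_subset hz hx h

theorem isPreconnected_image_normalize_segment {z x : E} (h : (0 : E) ∉ segment ℝ z x) :
    IsPreconnected (NormedSpace.normalize '' segment ℝ z x) :=
  (convex_segment z x).isPreconnected.image _ fun _ hw =>
    (continuousAt_normalize fun hw0 => h (hw0 ▸ hw)).continuousWithinAt

end InnerProductSpace

theorem mem_hemi_iff {c x : E3} : x ∈ hemi c ↔ x ∈ S2 ∧ 0 ≤ ⟪c, x⟫_ℝ :=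
  and_congr_right fun _ => Real.arccos_le_pi_div_two

theorem mem_openHemi_iff {c x : E3} : x ∈ openHemi c ↔ x ∈ S2 ∧ 0 < ⟪c, x⟫_ℝ :=
  and_congr_right fun _ => Real.arccos_lt_pi_div_two

theorem normalize_eq_self_of_mem_S2 {x : E3} (hx : x ∈ S2) : NormedSpace.normalize x = x :=
  NormedSpace.normalize_eq_self_of_norm_eq_one (mem_sphere_zero_iff_norm.1 hx)

theorem cos_sdist {x y : E3} (hx : x ∈ S2) (hy : y ∈ S2) :
    Real.cos (sdist x y) = ⟪x, y⟫_ℝ := by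
  have h := abs_real_inner_le_norm x y
  rw [mem_sphere_zero_iff_norm.1 hx, mem_sphere_zero_iff_norm.1 hy, one_mul, abs_le] at h
  exact Real.cos_arccos h.1 h.2

theorem sin_sdist_nonneg (x y : E3) : 0 ≤ Real.sin (sdist x y) :=
  Real.sin_nonneg_of_nonneg_of_le_pi (Real.arccos_nonneg _) (Real.arccos_le_pi _)

theorem exists_nonneg_smul_add_of_mem_arc {a b x : E3} (ha : a ∈ S2) (hb : b ∈ S2)
    (hab : -1 < ⟪a, b⟫_ℝ) (hx : x ∈ arc a b) :
    ∃ s t : ℝ, 0 ≤ s ∧ 0 ≤ t ∧ x = s • a + t • b := by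
  obtain ⟨hxS, hsum⟩ := hx
  have hγπ : sdist a b < Real.pi := Real.arccos_lt_pi.2 hab
  have hα := (cos_sdist ha hxS).symm
  have hβ := (cos_sdist hxS hb).symm
  have hγ := (cos_sdist ha hb).symm
  have hα0 : 0 ≤ sdist a x := Real.arccos_nonneg _
  have hβ0 : 0 ≤ sdist x b := Real.arccos_nonneg _
  have hsinα := sin_sdist_nonneg a x
  have hsinβ := sin_sdist_nonneg x b
  rw [← hsum] at hγ hγπ
  generalize sdist a x = α at *
  generalize sdist x b = β at *
  -- the spherical law of sines in the degenerate triangle `a x b`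
  have hy : Real.sin β • a + Real.sin α • b = Real.sin (α + β) • x := by
    rw [← sub_eq_zero, ← inner_self_eq_zero (𝕜 := ℝ)]
    have hn : ∀ v ∈ S2, ⟪v, v⟫_ℝ = 1 := fun v hv => by
      rw [real_inner_self_eq_norm_sq, mem_sphere_zero_iff_norm.1 hv, one_pow]
    simp only [inner_sub_left, inner_sub_right, inner_add_left, inner_add_right,
      real_inner_smul_left, real_inner_smul_right, hn a ha, hn b hb, hn x hxS,
      real_inner_comm a x, real_inner_comm a b, real_inner_comm x b, hα, hβ, hγ,
      Real.sin_add, Real.cos_add]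
    linear_combination -Real.sin α ^ 2 * Real.sin_sq_add_cos_sq β
      - Real.sin β ^ 2 * Real.sin_sq_add_cos_sq α
  rcases (Real.sin_nonneg_of_nonneg_of_le_pi (add_nonneg hα0 hβ0) hγπ.le).lt_or_eq
    with hsin | hsin
  · refine ⟨Real.sin β / Real.sin (α + β), Real.sin α / Real.sin (α + β),
      div_nonneg hsinβ hsin.le, div_nonneg hsinα hsin.le, ?_⟩
    rw [div_eq_inv_mul, div_eq_inv_mul, ← smul_smul, ← smul_smul, ← smul_add, hy, smul_smul,
      inv_mul_cancel₀ hsin.ne', one_smul]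
  · have hαβ : α + β = 0 :=
      (Real.sin_eq_zero_iff_of_lt_of_lt (by linarith [Real.pi_pos]) hγπ).1 hsin.symm
    have hax : a = x := by
      rw [← inner_eq_one_iff_of_norm_eq_one (𝕜 := ℝ) (mem_sphere_zero_iff_norm.1 ha)
        (mem_sphere_zero_iff_norm.1 hxS), hα, show α = 0 by linarith, Real.cos_zero]
    exact ⟨1, 0, zero_le_one, le_rfl, by simp [hax]⟩

theorem neg_notMem_openHemi {q x : E3} (hx : x ∈ openHemi q) : -x ∉ openHemi q := fun hnx => by
  have h := (mem_openHemi_iff.1 hnx).2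
  rw [inner_neg_right] at h
  exact (mem_openHemi_iff.1 hx).2.not_gt (neg_pos.1 h)

theorem neg_one_lt_inner_of_mem_openHemi {q a b : E3} (ha : a ∈ openHemi q)
    (hb : b ∈ openHemi q) : -1 < ⟪a, b⟫_ℝ := by
  have hna := mem_sphere_zero_iff_norm.1 ha.1
  have hnb := mem_sphere_zero_iff_norm.1 hb.1
  refine (neg_le_of_abs_le ?_).lt_of_ne fun h => neg_notMem_openHemi hb ?_
  · simpa [hna, hnb] using abs_real_inner_le_norm a b
  · rwa [← (inner_eq_neg_one_iff_of_norm_eq_one hna hnb).1 h.symm]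

theorem arc_subset_hemi {a b c : E3} (hab : -1 < ⟪a, b⟫_ℝ) (ha : a ∈ hemi c)
    (hb : b ∈ hemi c) : arc a b ⊆ hemi c := fun x hx => by
  obtain ⟨s, t, hs, ht, rfl⟩ := exists_nonneg_smul_add_of_mem_arc ha.1 hb.1 hab hx
  rw [mem_hemi_iff, real_inner_smul_add_smul_right]
  exact ⟨hx.1,
    add_nonneg (mul_nonneg hs (mem_hemi_iff.1 ha).2) (mul_nonneg ht (mem_hemi_iff.1 hb).2)⟩

theorem arc_subset_openHemi {a b q : E3} (ha : a ∈ openHemi q) (hb : b ∈ openHemi q) :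
    arc a b ⊆ openHemi q := fun x hx => by
  obtain ⟨s, t, hs, ht, rfl⟩ := exists_nonneg_smul_add_of_mem_arc ha.1 hb.1
    (neg_one_lt_inner_of_mem_openHemi ha hb) hx
  have hst : s ≠ 0 ∨ t ≠ 0 := by
    by_contra! h
    simpa [h.1, h.2, S2] using hx.1
  have hqa := (mem_openHemi_iff.1 ha).2
  have hqb := (mem_openHemi_iff.1 hb).2
  rw [mem_openHemi_iff, real_inner_smul_add_smul_right]
  refine ⟨hx.1, ?_⟩
  rcases hst with h | h
  · exact add_pos_of_pos_of_nonneg (mul_pos (hs.lt_of_ne' h) hqa) (mul_nonneg ht hqb.le)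
  · exact add_pos_of_nonneg_of_pos (mul_nonneg hs hqa.le) (mul_pos (ht.lt_of_ne' h) hqb)

theorem mem_relBoundary_of_mem_closure_diff {A : Set E3} {p : E3} (hp : p ∈ S2) (hpA : p ∈ A)
    (hcl : p ∈ closure (S2 \ A)) : p ∈ relBoundary A := by
  refine ⟨hp, fun r hr => ⟨⟨p, ⟨mem_ball_self hr, hp⟩, hpA⟩, ?_⟩⟩
  obtain ⟨y, ⟨hyS, hyA⟩, hpy⟩ := Metric.mem_closure_iff.1 hcl r hr
  exact ⟨y, ⟨mem_ball'.2 hpy, hyS⟩, hyA⟩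

theorem exists_mem_segment_normalize_mem_relBoundary {A : Set E3} {q z x : E3}
    (hA : IsClosed A) (hz : z ∈ openHemi q) (hx : x ∈ openHemi q) (hzA : z ∈ A)
    (hxA : x ∉ A) : ∃ w ∈ segment ℝ z x, w ≠ 0 ∧ NormedSpace.normalize w ∈ A ∧
      NormedSpace.normalize w ∈ relBoundary A := by
  have h0 :=
    zero_notMem_segment_of_inner_pos (mem_openHemi_iff.1 hz).2 (mem_openHemi_iff.1 hx).2
  have hPS : NormedSpace.normalize '' segment ℝ z x ⊆ S2 := by
    rintro _ ⟨w, hw, rfl⟩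
    exact mem_sphere_zero_iff_norm.2 (NormedSpace.norm_normalize fun h => h0 (h ▸ hw))
  obtain ⟨_, ⟨⟨w, hw, rfl⟩, hpA⟩, hpcl⟩ :=
    (isPreconnected_image_normalize_segment h0).exists_mem_inter_closure_diff hA
      ⟨z, ⟨z, left_mem_segment ℝ z x, normalize_eq_self_of_mem_S2 hz.1⟩, hzA⟩
      fun h => hxA (h ⟨x, right_mem_segment ℝ z x, normalize_eq_self_of_mem_S2 hx.1⟩)
  exact ⟨w, hw, fun h => h0 (h ▸ hw), hpA, mem_relBoundary_of_mem_closure_diff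
    (hPS ⟨w, hw, rfl⟩) hpA (closure_mono (sdiff_subset_sdiff_left hPS) hpcl)⟩

theorem supported_everywhere_convex_general (A : Set E3) (hA : A ⊆ S2) (hclosed : IsClosed A)
    (hint : relIntNonempty A) (q : E3) (hsub : A ⊆ openHemi q)
    (hsupp : ∀ p ∈ relBoundary A, ∃ c ∈ S2, A ⊆ hemi c ∧ sdist c p = Real.pi / 2) :
    SphConvex A := by
  refine ⟨hA, fun x hx hnx => neg_notMem_openHemi (hsub hx) (hsub hnx),
    fun a ha b hb x hx => by_contra fun hxA => ?_⟩
  obtain ⟨z, hzS, ρ, hρ, hball⟩ := hint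
  have hzA : z ∈ A := hball ⟨mem_ball_self hρ, hzS⟩
  obtain ⟨w, hw, hw0, hpA, hpB⟩ := exists_mem_segment_normalize_mem_relBoundary hclosed
    (hsub hzA) (arc_subset_openHemi (hsub ha) (hsub hb) hx) hzA hxA
  obtain ⟨c, hcS, hcA, hcp⟩ := hsupp _ hpB
  have hcz : 0 < ⟪c, z⟫_ℝ := inner_pos_of_ball_inter_sphere_subset
    (ne_zero_of_mem_unit_sphere ⟨c, hcS⟩) hzS hρ hball fun y hy => (mem_hemi_iff.1 (hcA hy)).2
  have hcx : 0 ≤ ⟪c, x⟫_ℝ := (mem_hemi_iff.1 (arc_subset_hemi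
    (neg_one_lt_inner_of_mem_openHemi (hsub ha) (hsub hb)) (hcA ha) (hcA hb) hx)).2
  have hcw : ⟪c, w⟫_ℝ = 0 := by
    have h := Real.arccos_eq_pi_div_two.1 hcp
    rwa [real_inner_normalize_right, mul_eq_zero,
      or_iff_right (inv_ne_zero (norm_ne_zero_iff.2 hw0))] at h
  rw [eq_right_of_mem_segment_of_inner_eq_zero hw hcz hcx hcw,
    normalize_eq_self_of_mem_S2 hx.1] at hpA
  exact hxA hpA

/-- a closed set on the sphere with nonempty relative interior,
contained in an open hemisphere, supported by a hemisphere at every relative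
boundary point, is spherically convex. -/
theorem supported_everywhere_convex (A : Set E3) (hA : A ⊆ S2) (hclosed : IsClosed A)
    (hint : relIntNonempty A) (q : E3) (hq : q ∈ S2) (hsub : A ⊆ openHemi q)
    (hsupp : ∀ p ∈ relBoundary A, ∃ c ∈ S2, A ⊆ hemi c ∧ sdist c p = Real.pi / 2) :
    SphConvex A :=
  supported_everywhere_convex_general A hA hclosed hint q hsub hsupp

end
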